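/- arXiv:1406.7846 — 2 statements merged into one kernel-verified Lean document; each statement's English description precedes it below -/
import Mathlib

section
/- The functional K(f) := ∫_0^∞ √(λ{x : |f(x)| ≥ t}) dt defines a norm on L^p([0,1]) for every p > 2 (it is finite, positive-definite, homogeneous, and satisfies the triangle inequality). -/
/-!
For `a ∈ [0, ∞]` one has `2 √a = ∫₀^∞ min (a / s², 1) ds`. Applying this to `a = λ{|f| ≥ t}` and
swapping the integrals gives `2 K(f) = ∫₀^∞ Ψ_{s⁻²}(f) ds`, where
`Ψ_c(f) = ∫₀^∞ min (c λ{|f| ≥ t}, 1) dt`. Because `t ↦ λ{|f| ≥ t}` is antitone, the layer-cake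
formula gives `Ψ_c(f) = min_{a ≥ 0} (a + c ∫ (|f| - a)⁺)`, and the pointwise inequality
`(|f + g| - a - b)⁺ ≤ (|f| - a)⁺ + (|g| - b)⁺` makes every `Ψ_c`, hence `K`, subadditive.
For `f ∈ Lᵖ` with `p > 2`, Chebyshev's bound `λ{|f| ≥ t} ≤ ‖f‖ₚᵖ t⁻ᵖ` makes `K(f)` finite.
-/

open MeasureTheory Set

/-- The functional `K(f) = ∫₀^∞ √(λ{x ∈ [0,1] : |f(x)| ≥ t}) dt`. -/
noncomputable def Kfun (f : ℝ → ℝ) : ℝ :=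
  ∫ t in Ioi (0:ℝ), Real.sqrt ((volume {x ∈ Icc (0:ℝ) 1 | t ≤ |f x|}).toReal)

open Filter
open scoped ENNReal

theorem setLIntegral_Ioi_eq_comp_add (φ : ℝ → ℝ≥0∞) (a : ℝ) :
    ∫⁻ t in Ioi a, φ t = ∫⁻ t in Ioi 0, φ (t + a) := by
  rw [← lintegral_indicator measurableSet_Ioi, ← lintegral_indicator measurableSet_Ioi,
    ← lintegral_add_right_eq_self _ a]
  congr 1 with t
  simp [indicator_apply]

theorem setLIntegral_min_mul_le {φ : ℝ → ℝ≥0∞} (hφ : Measurable φ) (c : ℝ≥0∞) {a : ℝ}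
    (ha : 0 ≤ a) :
    ∫⁻ t in Ioi 0, min (c * φ t) 1 ≤ ENNReal.ofReal a + c * ∫⁻ t in Ioi a, φ t := by
  rw [← Ioc_union_Ioi_eq_Ioi ha, lintegral_union measurableSet_Ioi Ioc_disjoint_Ioi_same,
    ← lintegral_const_mul c hφ]
  gcongr
  · calc ∫⁻ t in Ioc 0 a, min (c * φ t) 1
        ≤ ∫⁻ _ in Ioc 0 a, 1 := lintegral_mono fun _ => min_le_right _ _
      _ = ENNReal.ofReal a := by simp
  · exact min_le_left _ _

theorem exists_le_setLIntegral_min_mul {φ : ℝ → ℝ≥0∞} (hφ : Antitone φ) (c : ℝ≥0∞) :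
    ∃ a, 0 ≤ a ∧ ENNReal.ofReal a + c * ∫⁻ t in Ioi a, φ t ≤ ∫⁻ t in Ioi 0, min (c * φ t) 1 := by
  set S := {t : ℝ | 0 < t ∧ c * φ t ≤ 1}
  rcases S.eq_empty_or_nonempty with hS | hS
  · have h_one : ∀ t ∈ Ioi (0:ℝ), min (c * φ t) 1 = 1 := fun t ht =>
      min_eq_right (not_le.mp fun h => hS.subset ⟨ht, h⟩).le
    refine ⟨0, le_rfl, ?_⟩
    simp [setLIntegral_congr_fun measurableSet_Ioi h_one]
  have hbdd : BddBelow S := ⟨0, fun _ ht => ht.1.le⟩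
  have h_nonneg : 0 ≤ sInf S := le_csInf hS fun _ ht => ht.1.le
  refine ⟨sInf S, h_nonneg, ?_⟩
  have h_above : ∀ t ∈ Ioi (sInf S), min (c * φ t) 1 = c * φ t := by
    intro t ht
    obtain ⟨s, hs, hst⟩ := (csInf_lt_iff hbdd hS).mp ht
    exact min_eq_left ((mul_le_mul_right (hφ hst.le) c).trans hs.2)
  have h_below : ∀ t ∈ Ioo 0 (sInf S), min (c * φ t) 1 = 1 := fun t ht =>
    min_eq_right (not_le.mp fun h => (csInf_le hbdd ⟨ht.1, h⟩).not_gt ht.2).le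
  calc ENNReal.ofReal (sInf S) + c * ∫⁻ t in Ioi (sInf S), φ t
      = ∫⁻ t in Ioo 0 (sInf S) ∪ Ioi (sInf S), min (c * φ t) 1 := by
        rw [lintegral_union measurableSet_Ioi
            (Ioc_disjoint_Ioi_same.mono_left Ioo_subset_Ioc_self),
          setLIntegral_congr_fun measurableSet_Ioo h_below,
          setLIntegral_congr_fun measurableSet_Ioi h_above, lintegral_const_mul c hφ.measurable]
        simp
    _ ≤ ∫⁻ t in Ioi 0, min (c * φ t) 1 :=
        lintegral_mono_set (union_subset Ioo_subset_Ioi_self (Ioi_subset_Ioi h_nonneg))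

theorem setLIntegral_Ioi_ofReal_mul_rpow_neg_two {α r : ℝ} (hα : 0 ≤ α) (hr : 0 < r) :
    ∫⁻ s in Ioi r, ENNReal.ofReal (α * s ^ (-2:ℝ)) = ENNReal.ofReal (α / r) := by
  rw [← ofReal_integral_eq_lintegral_ofReal
    ((integrableOn_Ioi_rpow_of_lt (by norm_num) hr).const_mul α)
    (ae_restrict_of_forall_mem measurableSet_Ioi fun s hs => by
      have := hr.trans hs; positivity),
    integral_const_mul, integral_Ioi_rpow_of_lt (by norm_num) hr]
  norm_num [Real.rpow_neg_one, div_eq_mul_inv]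

theorem setLIntegral_min_rpow_neg_two_mul (a : ℝ≥0∞) :
    ∫⁻ s in Ioi (0:ℝ), min (ENNReal.ofReal (s ^ (-2:ℝ)) * a) 1 = 2 * a ^ (1/2 : ℝ) := by
  rcases eq_or_ne a ∞ with rfl | ha_top
  · have h_one : ∀ s ∈ Ioi (0:ℝ), min (ENNReal.ofReal (s ^ (-2:ℝ)) * ∞) 1 = 1 := fun s hs => by
      rw [ENNReal.mul_top (ENNReal.ofReal_pos.mpr (Real.rpow_pos_of_pos hs _)).ne',
        min_eq_right le_top]
    rw [setLIntegral_congr_fun measurableSet_Ioi h_one]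
    simp
  rcases eq_or_ne a 0 with rfl | ha_zero
  · simp
  obtain ⟨α, hα, rfl⟩ : ∃ α : ℝ, 0 < α ∧ ENNReal.ofReal α = a :=
    ⟨a.toReal, ENNReal.toReal_pos ha_zero ha_top, ENNReal.ofReal_toReal ha_top⟩
  set r := √α
  have hr : 0 < r := Real.sqrt_pos.mpr hα
  have h_mul : ∀ s : ℝ, ENNReal.ofReal (s ^ (-2:ℝ)) * ENNReal.ofReal α =
      ENNReal.ofReal (α * s ^ (-2:ℝ)) := fun s => by
    rw [mul_comm, ← ENNReal.ofReal_mul hα.le]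
  have h_one_le_iff : ∀ s : ℝ, 0 < s → (1 ≤ α * s ^ (-2:ℝ) ↔ s ≤ r) := fun s hs => by
    rw [Real.rpow_neg hs.le, le_mul_inv_iff₀ (by positivity), one_mul, Real.le_sqrt hs.le hα.le,
      Real.rpow_two]
  have h_below : ∀ s ∈ Ioc 0 r, min (ENNReal.ofReal (s ^ (-2:ℝ)) * ENNReal.ofReal α) 1 = 1 :=
    fun s hs => by
      rw [h_mul, min_eq_right (ENNReal.one_le_ofReal.mpr ((h_one_le_iff s hs.1).mpr hs.2))]
  have h_above : ∀ s ∈ Ioi r, min (ENNReal.ofReal (s ^ (-2:ℝ)) * ENNReal.ofReal α) 1 =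
      ENNReal.ofReal (α * s ^ (-2:ℝ)) := fun s hs => by
    rw [h_mul, min_eq_left (ENNReal.ofReal_le_one.mpr
      (not_le.mp fun h => hs.not_ge ((h_one_le_iff s (hr.trans hs)).mp h)).le)]
  rw [← Ioc_union_Ioi_eq_Ioi hr.le, lintegral_union measurableSet_Ioi Ioc_disjoint_Ioi_same,
    setLIntegral_congr_fun measurableSet_Ioc h_below,
    setLIntegral_congr_fun measurableSet_Ioi h_above,
    setLIntegral_Ioi_ofReal_mul_rpow_neg_two hα.le hr, Real.div_sqrt,
    ENNReal.ofReal_rpow_of_pos hα, ← Real.sqrt_eq_rpow]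
  simp only [lintegral_const, Measure.restrict_apply_univ, Real.volume_Ioc, sub_zero, one_mul]
  ring

section Distribution

variable {α : Type*} [MeasurableSpace α] (μ : Measure α)

noncomputable def distribution (f : α → ℝ) (t : ℝ) : ℝ≥0∞ :=
  μ {x | t ≤ |f x|}

variable {μ} (f : α → ℝ)

theorem distribution_antitone : Antitone (distribution μ f) :=
  fun _ _ hst => measure_mono fun _ hx => hst.trans hx

@[fun_prop]
theorem measurable_distribution : Measurable (distribution μ f) :=
  (distribution_antitone f).measurable

theorem distribution_ne_top [IsFiniteMeasure μ] (t : ℝ) : distribution μ f t ≠ ∞ :=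
  measure_ne_top μ _

theorem distribution_const_mul {c : ℝ} (hc : c ≠ 0) (t : ℝ) :
    distribution μ (fun x => c * f x) t = distribution μ f (t / |c|) := by
  simp only [distribution, abs_mul, div_le_iff₀ (abs_pos.mpr hc), mul_comm]

theorem distribution_zero_mul {t : ℝ} (ht : 0 < t) :
    distribution μ (fun x => 0 * f x) t = 0 := by
  simp [distribution, not_le.mpr ht]

theorem distribution_le_eLpNorm {p : ℝ} (hp : 0 < p) (hf : AEStronglyMeasurable f μ) {t : ℝ}
    (ht : 0 < t) :
    distribution μ f t ≤ (ENNReal.ofReal t)⁻¹ ^ p * eLpNorm f (ENNReal.ofReal p) μ ^ p := by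
  have h := meas_ge_le_mul_pow_eLpNorm_enorm μ (ENNReal.ofReal_pos.mpr hp).ne' ENNReal.ofReal_ne_top
    hf (ENNReal.ofReal_pos.mpr ht).ne' (absurd · ENNReal.ofReal_ne_top)
  simpa only [distribution, ENNReal.toReal_ofReal hp.le, Real.enorm_eq_ofReal_abs,
    ENNReal.ofReal_le_ofReal_iff (abs_nonneg _)] using h

theorem setLIntegral_Ioi_distribution (hf : AEMeasurable f μ) (a : ℝ) :
    ∫⁻ t in Ioi a, distribution μ f t = ∫⁻ x, ENNReal.ofReal (|f x| - a) ∂μ := by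
  have h_pos : ∀ x, ENNReal.ofReal (|f x| - a) = ENNReal.ofReal (max (|f x| - a) 0) := fun x => by
    rw [ENNReal.ofReal_max, ENNReal.ofReal_zero, max_zero]
  have h_level : ∀ t ∈ Ioi (0:ℝ), μ {x | t ≤ max (|f x| - a) 0} = distribution μ f (t + a) :=
    fun t (ht : 0 < t) => by
      congr 1 with x
      simp only [mem_ofPred_eq, le_max_iff, not_le.mpr ht, or_false]
      constructor <;> intro h <;> linarith
  rw [setLIntegral_Ioi_eq_comp_add, ← setLIntegral_congr_fun measurableSet_Ioi h_level]
  simp_rw [h_pos]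
  exact (lintegral_eq_lintegral_meas_le μ (ae_of_all _ fun _ => le_max_right _ _)
    ((hf.abs.sub_const a).max aemeasurable_const)).symm

end Distribution

section LorentzNorm

variable {α : Type*} [MeasurableSpace α] (μ : Measure α)

noncomputable def cappedIntegral (c : ℝ≥0∞) (f : α → ℝ) : ℝ≥0∞ :=
  ∫⁻ t in Ioi 0, min (c * distribution μ f t) 1

-- The Lorentz `L^{2,1}` norm, up to normalisation.
noncomputable def lorentzNorm (f : α → ℝ) : ℝ≥0∞ :=
  ∫⁻ t in Ioi 0, distribution μ f t ^ (1/2 : ℝ)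

variable {μ}

theorem cappedIntegral_add_le {f g : α → ℝ} (hf : AEMeasurable f μ) (hg : AEMeasurable g μ)
    (c : ℝ≥0∞) : cappedIntegral μ c (f + g) ≤ cappedIntegral μ c f + cappedIntegral μ c g := by
  obtain ⟨a, ha, hfa⟩ := exists_le_setLIntegral_min_mul (distribution_antitone (μ := μ) f) c
  obtain ⟨b, hb, hgb⟩ := exists_le_setLIntegral_min_mul (distribution_antitone (μ := μ) g) c
  calc cappedIntegral μ c (f + g)
      ≤ ENNReal.ofReal (a + b) + c * ∫⁻ x, ENNReal.ofReal (|(f + g) x| - (a + b)) ∂μ := by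
        rw [← setLIntegral_Ioi_distribution (f + g) (hf.add hg)]
        exact setLIntegral_min_mul_le (measurable_distribution _) c (add_nonneg ha hb)
    _ ≤ ENNReal.ofReal (a + b) +
          c * ∫⁻ x, (ENNReal.ofReal (|f x| - a) + ENNReal.ofReal (|g x| - b)) ∂μ := by
        gcongr with x
        rw [Pi.add_apply]
        exact (ENNReal.ofReal_le_ofReal (by linarith [abs_add_le (f x) (g x)])).trans
          ENNReal.ofReal_add_le
    _ = (ENNReal.ofReal a + c * ∫⁻ t in Ioi a, distribution μ f t) +
          (ENNReal.ofReal b + c * ∫⁻ t in Ioi b, distribution μ g t) := by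
        rw [lintegral_add_left' (hf.abs.sub_const a).ennreal_ofReal, ENNReal.ofReal_add ha hb,
          setLIntegral_Ioi_distribution f hf, setLIntegral_Ioi_distribution g hg]
        ring
    _ ≤ cappedIntegral μ c f + cappedIntegral μ c g := add_le_add hfa hgb

theorem measurable_cappedIntegral_rpow_neg_two (f : α → ℝ) :
    Measurable fun s : ℝ => cappedIntegral μ (ENNReal.ofReal (s ^ (-2:ℝ))) f :=
  Measurable.lintegral_prod_right (by fun_prop)

theorem two_mul_lorentzNorm (f : α → ℝ) :
    2 * lorentzNorm μ f = ∫⁻ s in Ioi 0, cappedIntegral μ (ENNReal.ofReal (s ^ (-2:ℝ))) f := by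
  calc 2 * lorentzNorm μ f = ∫⁻ t in Ioi 0, 2 * distribution μ f t ^ (1/2 : ℝ) :=
        (lintegral_const_mul' 2 _ ENNReal.ofNat_ne_top).symm
    _ = ∫⁻ t in Ioi 0, ∫⁻ s in Ioi 0,
          min (ENNReal.ofReal (s ^ (-2:ℝ)) * distribution μ f t) 1 := by
        simp_rw [setLIntegral_min_rpow_neg_two_mul]
    _ = ∫⁻ s in Ioi 0, cappedIntegral μ (ENNReal.ofReal (s ^ (-2:ℝ))) f :=
        lintegral_lintegral_swap (by fun_prop)

theorem lorentzNorm_add_le {f g : α → ℝ} (hf : AEMeasurable f μ) (hg : AEMeasurable g μ) :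
    lorentzNorm μ (f + g) ≤ lorentzNorm μ f + lorentzNorm μ g := by
  rw [← ENNReal.mul_le_mul_iff_right two_ne_zero ENNReal.ofNat_ne_top, mul_add,
    two_mul_lorentzNorm, two_mul_lorentzNorm, two_mul_lorentzNorm,
    ← lintegral_add_left (measurable_cappedIntegral_rpow_neg_two f)]
  exact lintegral_mono fun s => cappedIntegral_add_le hf hg _

theorem ae_eq_zero_iff_forall_distribution_eq_zero (f : α → ℝ) :
    f =ᵐ[μ] 0 ↔ ∀ t, 0 < t → distribution μ f t = 0 := by
  rw [EventuallyEq, ae_iff]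
  constructor
  · intro h t ht
    refine measure_mono_null ?_ h
    intro x (hx : t ≤ |f x|) (hfx : f x = 0)
    rw [hfx, abs_zero] at hx
    exact hx.not_gt ht
  · intro h
    refine measure_mono_null ?_ (measure_iUnion_null fun n : ℕ => h ((n:ℝ) + 1)⁻¹ (by positivity))
    intro x (hx : f x ≠ 0)
    obtain ⟨n, hn⟩ := exists_nat_one_div_lt (abs_pos.mpr hx)
    exact mem_iUnion.mpr ⟨n, by simpa [one_div] using hn.le⟩

theorem lorentzNorm_eq_zero_iff (f : α → ℝ) : lorentzNorm μ f = 0 ↔ f =ᵐ[μ] 0 := by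
  rw [lorentzNorm, lintegral_eq_zero_iff ((measurable_distribution f).pow_const _),
    ae_eq_zero_iff_forall_distribution_eq_zero]
  constructor
  · intro h t ht
    have : (ae (volume.restrict (Ioo (0:ℝ) t))).NeBot := ae_restrict_neBot.mpr (by simp [ht])
    have h_Ioo := ae_restrict_of_ae_restrict_of_subset (Ioo_subset_Ioi_self : Ioo (0:ℝ) t ⊆ Ioi 0) h
    obtain ⟨s, hs_zero, hs⟩ := (h_Ioo.and (ae_restrict_mem measurableSet_Ioo)).exists
    norm_num at hs_zero
    exact nonpos_iff_eq_zero.mp (hs_zero ▸ distribution_antitone f hs.2.le)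
  · intro h
    exact ae_restrict_of_forall_mem measurableSet_Ioi fun t ht => by simp [h t ht]

theorem lorentzNorm_lt_top [IsFiniteMeasure μ] {f : α → ℝ} {p : ℝ} (hp : 2 < p)
    (hf : MemLp f (ENNReal.ofReal p) μ) : lorentzNorm μ f < ∞ := by
  set S := eLpNorm f (ENNReal.ofReal p) μ
  have hS : S ^ (p/2) ≠ ∞ := ENNReal.rpow_ne_top_of_nonneg (by positivity) hf.2.ne
  have h_head : ∀ t, distribution μ f t ^ (1/2:ℝ) ≤ μ univ ^ (1/2:ℝ) := fun t =>
    ENNReal.rpow_le_rpow (measure_mono (subset_univ _)) (by norm_num)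
  have h_tail : ∀ t ∈ Ioi (1:ℝ),
      distribution μ f t ^ (1/2:ℝ) ≤ S ^ (p/2) * ENNReal.ofReal (t ^ (-(p/2))) := fun t ht => by
    have ht0 : 0 < t := one_pos.trans ht
    calc distribution μ f t ^ (1/2:ℝ)
        ≤ ((ENNReal.ofReal t)⁻¹ ^ p * S ^ p) ^ (1/2:ℝ) :=
          ENNReal.rpow_le_rpow (distribution_le_eLpNorm f (by linarith) hf.1 ht0) (by norm_num)
      _ = S ^ (p/2) * ENNReal.ofReal (t ^ (-(p/2))) := by
          rw [ENNReal.mul_rpow_of_nonneg _ _ (by norm_num), ← ENNReal.rpow_mul, ← ENNReal.rpow_mul,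
            mul_one_div, mul_comm, ENNReal.inv_rpow, ← ENNReal.rpow_neg,
            ENNReal.ofReal_rpow_of_pos ht0]
  rw [lorentzNorm, ← Ioc_union_Ioi_eq_Ioi zero_le_one,
    lintegral_union measurableSet_Ioi Ioc_disjoint_Ioi_same]
  refine ENNReal.add_lt_top.mpr ⟨?_, ?_⟩
  · calc ∫⁻ t in Ioc 0 1, distribution μ f t ^ (1/2:ℝ)
        ≤ ∫⁻ _ in Ioc 0 1, μ univ ^ (1/2:ℝ) := lintegral_mono h_head
      _ < ∞ := by simp [ENNReal.rpow_lt_top_of_nonneg]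
  · calc ∫⁻ t in Ioi 1, distribution μ f t ^ (1/2:ℝ)
        ≤ ∫⁻ t in Ioi 1, S ^ (p/2) * ENNReal.ofReal (t ^ (-(p/2))) :=
          setLIntegral_mono' measurableSet_Ioi h_tail
      _ = S ^ (p/2) * ∫⁻ t in Ioi 1, ENNReal.ofReal (t ^ (-(p/2))) :=
          lintegral_const_mul' _ _ hS
      _ < ∞ := ENNReal.mul_lt_top hS.lt_top
          (integrableOn_Ioi_rpow_of_lt (by linarith) one_pos).lintegral_lt_top

theorem integrableOn_sqrt_distribution {f : α → ℝ} (hf : lorentzNorm μ f ≠ ∞) :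
    IntegrableOn (fun t => √(distribution μ f t).toReal) (Ioi 0) := by
  simp_rw [Real.sqrt_eq_rpow, ENNReal.toReal_rpow]
  exact integrable_toReal_of_lintegral_ne_top
    ((measurable_distribution f).pow_const _).aemeasurable hf

theorem integral_sqrt_distribution [IsFiniteMeasure μ] (f : α → ℝ) :
    ∫ t in Ioi 0, √(distribution μ f t).toReal = (lorentzNorm μ f).toReal := by
  simp_rw [Real.sqrt_eq_rpow, ENNReal.toReal_rpow]
  exact integral_toReal ((measurable_distribution f).pow_const _).aemeasurable
    (ae_of_all _ fun t => ENNReal.rpow_lt_top_of_nonneg (by norm_num) (distribution_ne_top f t))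

theorem integral_sqrt_distribution_const_mul (f : α → ℝ) (c : ℝ) :
    ∫ t in Ioi 0, √(distribution μ (fun x => c * f x) t).toReal =
      |c| * ∫ t in Ioi 0, √(distribution μ f t).toReal := by
  rcases eq_or_ne c 0 with rfl | hc
  · rw [setIntegral_congr_fun measurableSet_Ioi fun t ht => by
      rw [distribution_zero_mul f ht]]
    simp
  · simp_rw [distribution_const_mul f hc, div_eq_mul_inv]
    rw [integral_comp_mul_right_Ioi (fun t => √(distribution μ f t).toReal) 0
      (inv_pos.mpr (abs_pos.mpr hc)), zero_mul, inv_inv, smul_eq_mul]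

end LorentzNorm

theorem volume_sep_Icc_eq_distribution (f : ℝ → ℝ) (t : ℝ) :
    volume {x ∈ Icc (0:ℝ) 1 | t ≤ |f x|} = distribution (volume.restrict (Icc 0 1)) f t := by
  rw [distribution, Measure.restrict_apply' measurableSet_Icc, inter_comm]
  rfl

theorem Kfun_eq_toReal_lorentzNorm (f : ℝ → ℝ) :
    Kfun f = (lorentzNorm (volume.restrict (Icc 0 1)) f).toReal := by
  simp_rw [Kfun, volume_sep_Icc_eq_distribution, integral_sqrt_distribution]

/-- `K` is a norm on `L^p([0,1])` for `p > 2`: it is finite, positive definite,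
absolutely homogeneous, and satisfies the triangle inequality. -/
theorem K_is_norm (p : ℝ) (hp : 2 < p) (f g : ℝ → ℝ)
    (hf : MemLp f (ENNReal.ofReal p) (volume.restrict (Icc 0 1)))
    (hg : MemLp g (ENNReal.ofReal p) (volume.restrict (Icc 0 1))) :
    IntegrableOn (fun t => Real.sqrt ((volume {x ∈ Icc (0:ℝ) 1 | t ≤ |f x|}).toReal))
        (Ioi (0:ℝ)) ∧
      (Kfun f = 0 ↔ f =ᵐ[volume.restrict (Icc 0 1)] 0) ∧
      (∀ c : ℝ, Kfun (fun x => c * f x) = |c| * Kfun f) ∧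
      Kfun (fun x => f x + g x) ≤ Kfun f + Kfun g := by
  have hKf := (lorentzNorm_lt_top hp hf).ne
  have hKg := (lorentzNorm_lt_top hp hg).ne
  refine ⟨?_, ?_, fun c => ?_, ?_⟩
  · simp_rw [volume_sep_Icc_eq_distribution]
    exact integrableOn_sqrt_distribution hKf
  · rw [Kfun_eq_toReal_lorentzNorm, ENNReal.toReal_eq_zero_iff, or_iff_left hKf,
      lorentzNorm_eq_zero_iff]
  · simp_rw [Kfun, volume_sep_Icc_eq_distribution]
    exact integral_sqrt_distribution_const_mul f c
  · simp_rw [Kfun_eq_toReal_lorentzNorm, ← ENNReal.toReal_add hKf hKg]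
    exact ENNReal.toReal_mono (ENNReal.add_ne_top.mpr ⟨hKf, hKg⟩)
      (lorentzNorm_add_le hf.aemeasurable hg.aemeasurable)
end

section
/- The stepping operator associated to a measurable partition P of [0,1] is contractive with respect to the jumble norm: for every u ∈ ⋂_{p<∞} L^p([0,1]^2), ‖u_P‖_⊞ ≤ ‖u‖_⊞. -/
open MeasureTheory Set Classical

/-- The jumble norm of `u : [0,1]² → ℝ`. -/
noncomputable def jumbleNorm (u : ℝ × ℝ → ℝ) : ℝ :=
  sSup {r : ℝ | ∃ S T : Set ℝ, MeasurableSet S ∧ MeasurableSet T ∧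
    S ⊆ Icc 0 1 ∧ T ⊆ Icc 0 1 ∧ 0 < (volume S).toReal ∧ 0 < (volume T).toReal ∧
    r = |∫ p in S ×ˢ T, u p| / Real.sqrt ((volume S).toReal * (volume T).toReal)}

/-- The stepping of `u` with respect to the partition `P`: on `P i × P j`, the value is
the average of `u` over `P i × P j`. -/
noncomputable def stepFn (k : ℕ) (P : Fin k → Set ℝ) (u : ℝ × ℝ → ℝ) : ℝ × ℝ → ℝ :=
  fun p => ∑ i : Fin k, ∑ j : Fin k,
    if p.1 ∈ P i ∧ p.2 ∈ P j then
      (∫ q in P i ×ˢ P j, u q) / ((volume (P i)).toReal * (volume (P j)).toReal)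
    else 0

/-!
Write `c i j = ∫_{P i × P j} u` and `a i = λ(S ∩ P i) / λ(P i)`, `b j = λ(T ∩ P j) / λ(P j)`, so
that `∫_{S × T} u_P = ∑ a i * b j * c i j` with `a, b ∈ [0,1]^k`, `∑ a i λ(P i) = λ(S)` and
`∑ b j λ(P j) = λ(T)`. Unions of cells are admissible in the jumble norm, so
`|∑_{I × J} c i j| ≤ ‖u‖_⊞ √(∑_I λ(P i)) √(∑_J λ(P j))` for all sets of indices `I, J`; the
supremum defining `‖u‖_⊞` is finite because `u ∈ L²` (Cauchy–Schwarz).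
It remains to pass from indicator weights to weights in `[0,1]`: the function
`a ↦ |∑ a i * d i| - C √(∑ a i λ i)` is convex, so on the cube `[0,1]^k` it is largest at a
vertex, i.e. at the indicator of some `I`. Applying this in `a` and then in `b` gives the bound.
-/

theorem ConvexOn.exists_le_apply_indicator {ι : Type*} [Fintype ι] {f : (ι → ℝ) → ℝ}
    (hf : ConvexOn ℝ (Icc 0 1) f) {a : ι → ℝ} (ha : a ∈ Icc 0 1) :
    ∃ I : Finset ι, f a ≤ f fun i => if i ∈ I then 1 else 0 := by
  suffices key : ∀ s : Finset ι, ∀ a ∈ Icc (0 : ι → ℝ) 1, (∀ i ∉ s, a i = 0 ∨ a i = 1) →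
      ∃ I : Finset ι, f a ≤ f fun i => if i ∈ I then 1 else 0 from
    key Finset.univ a ha (by simp)
  intro s
  induction s using Finset.induction_on with
  | empty =>
    intro a _ h01
    refine ⟨Finset.univ.filter (a · = 1), le_of_eq (congrArg f (funext fun i => ?_))⟩
    rcases h01 i (Finset.notMem_empty i) with h | h <;> simp [h]
  | insert j s _ ih =>
    -- `a` lies on the segment between its roundings to `0` and to `1` in the coordinate `j`
    intro a ha h01
    have hround : ∀ t : ℝ, (t = 0 ∨ t = 1) → Function.update a j t ∈ Icc (0 : ι → ℝ) 1 ∧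
        ∀ i ∉ s, Function.update a j t i = 0 ∨ Function.update a j t i = 1 := by
      refine fun t ht => ⟨⟨fun i => ?_, fun i => ?_⟩, fun i hi => ?_⟩ <;>
        rcases eq_or_ne i j with rfl | hij
      · rcases ht with rfl | rfl <;> simp
      · simpa [hij] using ha.1 i
      · rcases ht with rfl | rfl <;> simp
      · simpa [hij] using ha.2 i
      · simpa using ht
      · simpa [hij] using h01 i (by simp [hij, hi])
    have hseg : a ∈ segment ℝ (Function.update a j 0) (Function.update a j 1) := by
      refine ⟨1 - a j, a j, sub_nonneg.2 (ha.2 j), ha.1 j, by ring, funext fun i => ?_⟩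
      rcases eq_or_ne i j with rfl | hij
      · simp
      · simp only [Pi.add_apply, Pi.smul_apply, Function.update_of_ne hij, smul_eq_mul]
        ring
    obtain ⟨h0, h0s⟩ := hround 0 (.inl rfl)
    obtain ⟨h1, h1s⟩ := hround 1 (.inr rfl)
    rcases le_max_iff.mp (hf.le_on_segment h0 h1 hseg) with h | h
    · exact (ih _ h0 h0s).imp fun _ => h.trans
    · exact (ih _ h1 h1s).imp fun _ => h.trans

theorem abs_sum_mul_le_of_forall_finset {ι : Type*} [Fintype ι] {lam d a : ι → ℝ} {C : ℝ}
    (hC : 0 ≤ C) (hlam : 0 ≤ lam) (ha : a ∈ Icc 0 1)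
    (h : ∀ I : Finset ι, |∑ i ∈ I, d i| ≤ C * √(∑ i ∈ I, lam i)) :
    |∑ i, a i * d i| ≤ C * √(∑ i, a i * lam i) := by
  have habs : ConvexOn ℝ (Icc 0 1) fun a : ι → ℝ => |∑ i, a i * d i| :=
    (((convexOn_norm convex_univ).comp_linearMap (Fintype.linearCombination ℝ d)).subset
      (subset_univ _) (convex_Icc 0 1)).congr fun a _ => by simp [Fintype.linearCombination_apply]
  have hsqrt : ConcaveOn ℝ (Icc 0 1) fun a : ι → ℝ => C * √(∑ i, a i * lam i) := by
    refine ((Real.strictConcaveOn_sqrt.concaveOn.comp_linearMap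
      (Fintype.linearCombination ℝ lam)).subset (fun a ha => ?_) (convex_Icc 0 1)).smul hC
      |>.congr fun a _ => by simp [Fintype.linearCombination_apply]
    exact Finset.sum_nonneg fun i _ => mul_nonneg (ha.1 i) (hlam i)
  obtain ⟨I, hI⟩ := (habs.sub hsqrt).exists_le_apply_indicator ha
  simp only [Pi.sub_apply, ite_mul, one_mul, zero_mul, Finset.sum_ite_mem, Finset.univ_inter] at hI
  linarith [h I]

theorem abs_sum_sum_mul_le_of_forall_finset {ι κ : Type*} [Fintype ι] [Fintype κ]
    {lam a : ι → ℝ} {mu b : κ → ℝ} {c : ι → κ → ℝ} {C : ℝ} (hC : 0 ≤ C)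
    (hlam : 0 ≤ lam) (hmu : 0 ≤ mu) (ha : a ∈ Icc 0 1) (hb : b ∈ Icc 0 1)
    (h : ∀ (I : Finset ι) (J : Finset κ),
      |∑ i ∈ I, ∑ j ∈ J, c i j| ≤ C * √(∑ i ∈ I, lam i) * √(∑ j ∈ J, mu j)) :
    |∑ i, ∑ j, a i * b j * c i j| ≤ C * √(∑ i, a i * lam i) * √(∑ j, b j * mu j) := by
  have hrows : ∀ I : Finset ι, |∑ i ∈ I, ∑ j, b j * c i j| ≤
      C * √(∑ j, b j * mu j) * √(∑ i ∈ I, lam i) := by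
    intro I
    rw [Finset.sum_comm, mul_right_comm]
    simp_rw [← Finset.mul_sum]
    refine abs_sum_mul_le_of_forall_finset (by positivity) hmu hb fun J => ?_
    rw [Finset.sum_comm]
    exact h I J
  calc |∑ i, ∑ j, a i * b j * c i j| = |∑ i, a i * ∑ j, b j * c i j| := by
        simp_rw [Finset.mul_sum, mul_assoc]
    _ ≤ C * √(∑ j, b j * mu j) * √(∑ i, a i * lam i) :=
        abs_sum_mul_le_of_forall_finset (by positivity) hlam ha hrows
    _ = C * √(∑ i, a i * lam i) * √(∑ j, b j * mu j) := mul_right_comm _ _ _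

theorem abs_setIntegral_le_sqrt_integral_sq_mul_sqrt {α : Type*} [MeasurableSpace α]
    {μ : Measure α} {u : α → ℝ} (hu : MemLp u 2 μ) {A : Set α} (hA : μ A ≠ ⊤) :
    |∫ x in A, u x ∂μ| ≤ √(∫ x, u x ^ 2 ∂μ) * √(μ.real A) := by
  have : IsFiniteMeasure (μ.restrict A) := isFiniteMeasure_restrict.2 hA
  have two : ENNReal.ofReal 2 = 2 := by norm_num
  have holder := integral_mul_norm_le_Lp_mul_Lq (μ := μ.restrict A) (g := fun _ => (1 : ℝ))
    Real.HolderConjugate.two_two (two ▸ hu.restrict A) (two ▸ memLp_const 1)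
  simp only [norm_one, mul_one, one_pow, integral_const, smul_eq_mul, Real.rpow_two,
    measureReal_restrict_apply_univ, Real.norm_eq_abs, sq_abs, ← Real.sqrt_eq_rpow] at holder
  calc |∫ x in A, u x ∂μ| ≤ ∫ x in A, |u x| ∂μ := abs_integral_le_integral_abs
    _ ≤ √(∫ x in A, u x ^ 2 ∂μ) * √(μ.real A) := holder
    _ ≤ √(∫ x, u x ^ 2 ∂μ) * √(μ.real A) := by
      gcongr √?_ * _
      exact setIntegral_le_integral hu.integrable_sq (.of_forall fun x => sq_nonneg (u x))

theorem volume_ne_top_of_subset_Icc {S : Set ℝ} {a b : ℝ} (hS : S ⊆ Icc a b) : volume S ≠ ⊤ :=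
  measure_ne_top_of_subset hS measure_Icc_lt_top.ne

theorem abs_setIntegral_prod_le_sqrt_integral_sq_mul_sqrt {u : ℝ × ℝ → ℝ}
    (hu : MemLp u 2 (volume.restrict (Icc 0 1 ×ˢ Icc 0 1))) {S T : Set ℝ}
    (hS : S ⊆ Icc 0 1) (hT : T ⊆ Icc 0 1) :
    |∫ p in S ×ˢ T, u p| ≤
      √(∫ p in Icc 0 1 ×ˢ Icc 0 1, u p ^ 2) * √((volume S).toReal * (volume T).toReal) := by
  have hST : S ×ˢ T ⊆ Icc (0 : ℝ) 1 ×ˢ Icc 0 1 := prod_mono hS hT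
  have hvol : volume (S ×ˢ T) = volume S * volume T := by
    rw [Measure.volume_eq_prod, Measure.prod_prod]
  have := abs_setIntegral_le_sqrt_integral_sq_mul_sqrt hu (A := S ×ˢ T) (by
    rw [Measure.restrict_eq_self _ hST]
    exact measure_ne_top_of_subset hST (isCompact_Icc.prod isCompact_Icc).measure_lt_top.ne)
  rwa [Measure.restrict_restrict_of_subset hST, measureReal_def, Measure.restrict_eq_self _ hST,
    hvol, ENNReal.toReal_mul] at this

theorem jumbleNorm_nonneg (u : ℝ × ℝ → ℝ) : 0 ≤ jumbleNorm u :=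
  Real.sSup_nonneg fun _ ⟨_, _, _, _, _, _, _, _, hr⟩ => hr ▸ by positivity

theorem abs_setIntegral_prod_le_jumbleNorm {u : ℝ × ℝ → ℝ}
    (hu : MemLp u 2 (volume.restrict (Icc 0 1 ×ˢ Icc 0 1))) {S T : Set ℝ}
    (hS : MeasurableSet S) (hT : MeasurableSet T) (hSs : S ⊆ Icc 0 1) (hTs : T ⊆ Icc 0 1) :
    |∫ p in S ×ˢ T, u p| ≤ jumbleNorm u * √(volume S).toReal * √(volume T).toReal := by
  rw [mul_assoc, ← Real.sqrt_mul ENNReal.toReal_nonneg]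
  rcases (mul_nonneg (α := ℝ) ENNReal.toReal_nonneg ENNReal.toReal_nonneg).eq_or_lt with h0 | hpos
  · -- a null rectangle is not admissible in the supremum, but Cauchy–Schwarz kills it
    have := abs_setIntegral_prod_le_sqrt_integral_sq_mul_sqrt hu hSs hTs
    rwa [← h0, Real.sqrt_zero, mul_zero] at this ⊢
  · rw [← div_le_iff₀ (Real.sqrt_pos.2 hpos)]
    refine le_csSup ⟨√(∫ p in Icc 0 1 ×ˢ Icc 0 1, u p ^ 2), ?_⟩
      ⟨S, T, hS, hT, hSs, hTs, pos_of_mul_pos_left hpos ?_, pos_of_mul_pos_right hpos ?_, rfl⟩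
    · rintro _ ⟨S', T', -, -, hS', hT', hSp, hTp, rfl⟩
      rw [div_le_iff₀ (Real.sqrt_pos.2 (mul_pos hSp hTp))]
      exact abs_setIntegral_prod_le_sqrt_integral_sq_mul_sqrt hu hS' hT'
    all_goals exact ENNReal.toReal_nonneg

theorem setIntegral_biUnion_prod_biUnion {α β ι κ : Type*} [MeasurableSpace α]
    [MeasurableSpace β] {μ : Measure (α × β)} {P : ι → Set α} {Q : κ → Set β}
    (hP : ∀ i, MeasurableSet (P i)) (hQ : ∀ j, MeasurableSet (Q j))
    (hPd : Pairwise (Function.onFun Disjoint P)) (hQd : Pairwise (Function.onFun Disjoint Q))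
    {u : α × β → ℝ} (hu : ∀ i j, IntegrableOn u (P i ×ˢ Q j) μ) (I : Finset ι) (J : Finset κ) :
    ∫ p in (⋃ i ∈ I, P i) ×ˢ (⋃ j ∈ J, Q j), u p ∂μ =
      ∑ i ∈ I, ∑ j ∈ J, ∫ p in P i ×ˢ Q j, u p ∂μ := by
  have hunion : (⋃ i ∈ I, P i) ×ˢ (⋃ j ∈ J, Q j) = ⋃ x ∈ I ×ˢ J, P x.1 ×ˢ Q x.2 := by
    ext; simp only [mem_prod, mem_iUnion, Finset.mem_product, Prod.exists]; tauto
  rw [hunion, integral_biUnion_finset _ (fun x _ => (hP x.1).prod (hQ x.2)) ?_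
    fun x _ => hu x.1 x.2, Finset.sum_product]
  rintro ⟨i, j⟩ - ⟨i', j'⟩ - hne
  by_cases hi : i = i'
  · exact disjoint_prod.2 (.inr (hQd fun hj : j = j' => hne (by rw [hi, hj])))
  · exact disjoint_prod.2 (.inl (hPd hi))

theorem sum_toReal_measure_inter_eq {α ι : Type*} [MeasurableSpace α] [Fintype ι]
    {μ : Measure α} {P : ι → Set α} (hP : ∀ i, MeasurableSet (P i))
    (hPd : Pairwise (Function.onFun Disjoint P)) {X : Set α} (hX : MeasurableSet X)
    (hXP : X ⊆ ⋃ i, P i) (hXfin : μ X ≠ ⊤) :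
    ∑ i, (μ (X ∩ P i)).toReal = (μ X).toReal := by
  conv_rhs => rw [← inter_eq_self_of_subset_left hXP, inter_iUnion]
  exact (measureReal_iUnion_fintype
    (fun i j hij => (hPd hij).mono inter_subset_right inter_subset_right)
    (fun i => hX.inter (hP i)) fun i => measure_ne_top_of_subset inter_subset_left hXfin).symm

theorem toReal_measure_inter_div_mem_Icc {α ι : Type*} [MeasurableSpace α] {μ : Measure α}
    (A : Set α) {P : ι → Set α} (hP : ∀ i, μ (P i) ≠ ⊤) :
    (fun i => (μ (A ∩ P i)).toReal / (μ (P i)).toReal) ∈ Icc 0 1 :=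
  ⟨fun _ => by positivity, fun i => div_le_one_of_le₀
    (ENNReal.toReal_mono (hP i) (measure_mono inter_subset_right)) ENNReal.toReal_nonneg⟩

theorem toReal_measure_inter_div_mul {α : Type*} [MeasurableSpace α] {μ : Measure α}
    (A : Set α) {B : Set α} (hB : μ B ≠ ⊤) :
    (μ (A ∩ B)).toReal / (μ B).toReal * (μ B).toReal = (μ (A ∩ B)).toReal := by
  rcases eq_or_ne (μ B).toReal 0 with h | h
  · rw [h, mul_zero, eq_comm]
    exact measureReal_mono_null inter_subset_right h hB
  · exact div_mul_cancel₀ _ h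

theorem setIntegral_prod_stepFn {k : ℕ} {P : Fin k → Set ℝ} (hP : ∀ i, MeasurableSet (P i))
    (u : ℝ × ℝ → ℝ) {S T : Set ℝ} (hS : volume S ≠ ⊤) (hT : volume T ≠ ⊤) :
    ∫ p in S ×ˢ T, stepFn k P u p = ∑ i, ∑ j,
      (volume (S ∩ P i)).toReal / (volume (P i)).toReal *
        ((volume (T ∩ P j)).toReal / (volume (P j)).toReal) * ∫ q in P i ×ˢ P j, u q := by
  have hvol : ∀ A B : Set ℝ, volume (A ×ˢ B) = volume A * volume B := fun A B => by
    rw [Measure.volume_eq_prod, Measure.prod_prod]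
  have hcell : ∀ i j (c : ℝ) (p : ℝ × ℝ),
      (if p.1 ∈ P i ∧ p.2 ∈ P j then c else 0) = (P i ×ˢ P j).indicator (fun _ => c) p :=
    fun i j c p => by simp [indicator]
  have hint : ∀ i j (c : ℝ), IntegrableOn ((P i ×ˢ P j).indicator fun _ => c) (S ×ˢ T) :=
    fun i j c => (integrableOn_const (by rw [hvol]; exact ENNReal.mul_ne_top hS hT)).indicator
      ((hP i).prod (hP j))
  simp only [stepFn, hcell]
  rw [integral_finsetSum _ fun i _ => integrable_finsetSum _ fun j _ => hint i j _]
  refine Finset.sum_congr rfl fun i _ => ?_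
  rw [integral_finsetSum _ fun j _ => hint i j _]
  refine Finset.sum_congr rfl fun j _ => ?_
  rw [setIntegral_indicator ((hP i).prod (hP j)), setIntegral_const, prod_inter_prod, smul_eq_mul,
    measureReal_def, hvol, ENNReal.toReal_mul]
  ring

theorem abs_sum_sum_setIntegral_le_jumbleNorm {ι : Type*} {P : ι → Set ℝ}
    (hP : ∀ i, MeasurableSet (P i)) (hPd : Pairwise (Function.onFun Disjoint P))
    (hPs : ∀ i, P i ⊆ Icc 0 1) {u : ℝ × ℝ → ℝ}
    (hu : MemLp u 2 (volume.restrict (Icc 0 1 ×ˢ Icc 0 1))) (I J : Finset ι) :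
    |∑ i ∈ I, ∑ j ∈ J, ∫ p in P i ×ˢ P j, u p| ≤
      jumbleNorm u * √(∑ i ∈ I, (volume (P i)).toReal) * √(∑ j ∈ J, (volume (P j)).toReal) := by
  have : IsFiniteMeasure (volume.restrict (Icc (0 : ℝ) 1 ×ˢ Icc (0 : ℝ) 1)) :=
    isFiniteMeasure_restrict.2 (isCompact_Icc.prod isCompact_Icc).measure_lt_top.ne
  have hint : IntegrableOn u (Icc 0 1 ×ˢ Icc 0 1) := hu.integrable one_le_two
  have hvol : ∀ K : Finset ι, (volume (⋃ i ∈ K, P i)).toReal = ∑ i ∈ K, (volume (P i)).toReal :=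
    fun K => measureReal_biUnion_finset (fun i _ j _ hij => hPd hij) (fun i _ => hP i)
      fun i _ => volume_ne_top_of_subset_Icc (hPs i)
  have hsub : ∀ K : Finset ι, (⋃ i ∈ K, P i) ⊆ Icc 0 1 := fun K => iUnion₂_subset fun i _ => hPs i
  rw [← hvol, ← hvol, ← setIntegral_biUnion_prod_biUnion hP hP hPd hPd
    (fun i j => hint.mono_set (prod_mono (hPs i) (hPs j)))]
  exact abs_setIntegral_prod_le_jumbleNorm hu (I.measurableSet_biUnion fun i _ => hP i)
    (J.measurableSet_biUnion fun i _ => hP i) (hsub I) (hsub J)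

theorem stepping_contractive_jumble_general (k : ℕ) (P : Fin k → Set ℝ)
    (hmeas : ∀ i, MeasurableSet (P i))
    (hdisj : Pairwise (Function.onFun Disjoint P))
    (hcover : (⋃ i, P i) = Icc 0 1)
    (u : ℝ × ℝ → ℝ)
    (hu : ∀ p : ℝ, 1 ≤ p →
      MemLp u (ENNReal.ofReal p) (volume.restrict (Icc 0 1 ×ˢ Icc 0 1))) :
    jumbleNorm (stepFn k P u) ≤ jumbleNorm u := by
  have hPs : ∀ i, P i ⊆ Icc 0 1 := fun i => hcover ▸ subset_iUnion P i
  have hPfin : ∀ i, volume (P i) ≠ ⊤ := fun i => volume_ne_top_of_subset_Icc (hPs i)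
  have hu2 : MemLp u 2 (volume.restrict (Icc 0 1 ×ˢ Icc 0 1)) := by simpa using hu 2 one_le_two
  have hcoef : ∀ X, MeasurableSet X → X ⊆ Icc 0 1 →
      (fun i => (volume (X ∩ P i)).toReal / (volume (P i)).toReal) ∈ Icc 0 1 ∧
      ∑ i, (volume (X ∩ P i)).toReal / (volume (P i)).toReal * (volume (P i)).toReal =
        (volume X).toReal := fun X hX hXs =>
    ⟨toReal_measure_inter_div_mem_Icc X hPfin, by
      simp_rw [toReal_measure_inter_div_mul X (hPfin _)]
      exact sum_toReal_measure_inter_eq hmeas hdisj hX (hcover ▸ hXs)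
        (volume_ne_top_of_subset_Icc hXs)⟩
  refine Real.sSup_le ?_ (jumbleNorm_nonneg u)
  rintro _ ⟨S, T, hS, hT, hSs, hTs, hSp, hTp, rfl⟩
  obtain ⟨hSc, hSsum⟩ := hcoef S hS hSs
  obtain ⟨hTc, hTsum⟩ := hcoef T hT hTs
  rw [div_le_iff₀ (Real.sqrt_pos.2 (mul_pos hSp hTp)), Real.sqrt_mul ENNReal.toReal_nonneg,
    ← mul_assoc, ← hSsum, ← hTsum, setIntegral_prod_stepFn hmeas u
      (volume_ne_top_of_subset_Icc hSs) (volume_ne_top_of_subset_Icc hTs)]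
  exact abs_sum_sum_mul_le_of_forall_finset (jumbleNorm_nonneg u)
    (fun i => ENNReal.toReal_nonneg) (fun i => ENNReal.toReal_nonneg) hSc hTc
    (abs_sum_sum_setIntegral_le_jumbleNorm hmeas hdisj hPs hu2)

/-- The stepping operator is contractive in the jumble norm. -/
theorem stepping_contractive_jumble (k : ℕ) (P : Fin k → Set ℝ)
    (hmeas : ∀ i, MeasurableSet (P i))
    (hdisj : Pairwise (Function.onFun Disjoint P))
    (hcover : (⋃ i, P i) = Icc 0 1)
    (hpos : ∀ i, 0 < (volume (P i)).toReal)
    (u : ℝ × ℝ → ℝ)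
    (hu : ∀ p : ℝ, 1 ≤ p →
      MemLp u (ENNReal.ofReal p) (volume.restrict (Icc 0 1 ×ˢ Icc 0 1))) :
    jumbleNorm (stepFn k P u) ≤ jumbleNorm u :=
  stepping_contractive_jumble_general k P hmeas hdisj hcover u hu
end
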